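/- Suppose R contains ℚ (R is a ℚ-algebra), let d ≥ 0 and let m be an integer with 0 ≤ m ≤ d/2. If h ∈ R[X_1,…,X_N] is harmonic and homogeneous of degree d − 2m, then (X·X)·Δ((X·X)^m · h) = 2m·(N − 2 + 2d − 2m)·(X·X)^m · h; that is, (X·X)^m · h is an eigenvector of the operator p ↦ (X·X)·Δp on homogeneous polynomials of degree d with eigenvalue 2m(N−2+2d−2m). -/

import Mathlib

open MvPolynomial

/-- The rotation generator `M_{jk} p = X_j ∂_k p − X_k ∂_j p`. -/
noncomputable def rot {R : Type*} [CommRing R] {N : ℕ} (j k : Fin N)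
    (p : MvPolynomial (Fin N) R) : MvPolynomial (Fin N) R :=
  X j * pderiv k p - X k * pderiv j p

/-- The Laplacian `Δ p = Σ_j ∂_j² p`. -/
noncomputable def lap {R : Type*} [CommRing R] {N : ℕ}
    (p : MvPolynomial (Fin N) R) : MvPolynomial (Fin N) R :=
  ∑ j, pderiv j (pderiv j p)

/-- The polynomial `X·X = X_1² + ⋯ + X_N²`. -/
noncomputable def XX (R : Type*) [CommRing R] (N : ℕ) : MvPolynomial (Fin N) R :=
  ∑ j, X j ^ 2

/-!
Since `∂_k (X·X) = 2 X_k`, the product rule gives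
`Δ((X·X) q) = 2N q + 4 Σ_k X_k ∂_k q + (X·X) Δq`, and by Euler's identity the middle term is
`4 deg(q) q` for homogeneous `q`. Peeling off one factor `X·X` at a time from `(X·X)^m h`
therefore lowers the power of `X·X` by one and multiplies by an explicit scalar, and the
harmonicity of `h` ends the recursion.
-/

section

variable {R : Type*} [CommRing R] {N : ℕ}

lemma pderiv_XX (k : Fin N) : pderiv k (XX R N) = 2 * X k := by
  simp [XX, pderiv_X, Pi.single_apply, mul_ite, Finset.sum_ite_eq']

lemma isHomogeneous_XX : (XX R N).IsHomogeneous 2 :=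
  IsHomogeneous.sum _ _ _ fun i _ => isHomogeneous_X_pow i 2

lemma pderiv_pderiv_XX_mul (k : Fin N) (q : MvPolynomial (Fin N) R) :
    pderiv k (pderiv k (XX R N * q)) =
      2 • q + 4 • (X k * pderiv k q) + XX R N * pderiv k (pderiv k q) := by
  have pderiv_two : pderiv k (2 : MvPolynomial (Fin N) R) = 0 := by
    rw [← map_ofNat C 2, pderiv_C]
  simp only [pderiv_mul, map_add, pderiv_XX, pderiv_X_self, pderiv_two, nsmul_eq_mul]
  push_cast
  ring

lemma lap_XX_mul (q : MvPolynomial (Fin N) R) :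
    lap (XX R N * q) = (2 * N) • q + 4 • ∑ k, X k * pderiv k q + XX R N * lap q := by
  simp only [lap, pderiv_pderiv_XX_mul, Finset.sum_add_distrib, Finset.sum_const,
    Finset.card_univ, Fintype.card_fin, smul_smul, mul_comm N, Finset.smul_sum, Finset.mul_sum]

lemma lap_XX_mul_of_isHomogeneous {n : ℕ} {q : MvPolynomial (Fin N) R}
    (hq : q.IsHomogeneous n) :
    lap (XX R N * q) = (2 * N + 4 * n) • q + XX R N * lap q := by
  rw [lap_XX_mul, hq.sum_X_mul_pderiv, smul_smul, add_smul]

/-- Indexed by `m + 1` so that the scalar needs no truncated subtraction. -/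
lemma lap_XX_pow_succ_mul {e : ℕ} {h : MvPolynomial (Fin N) R}
    (hharm : lap h = 0) (hhom : h.IsHomogeneous e) (m : ℕ) :
    lap (XX R N ^ (m + 1) * h) = (2 * (m + 1) * (N + 2 * e + 2 * m)) • (XX R N ^ m * h) := by
  induction m with
  | zero =>
    rw [pow_one, pow_zero, one_mul, lap_XX_mul_of_isHomogeneous hhom, hharm, mul_zero,
      add_zero]
    congr 1
    ring
  | succ m ih =>
    have hq : (XX R N ^ (m + 1) * h).IsHomogeneous (2 * (m + 1) + e) :=
      (isHomogeneous_XX.pow (m + 1)).mul hhom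
    rw [pow_succ', mul_assoc, lap_XX_mul_of_isHomogeneous hq, ih, mul_smul_comm,
      ← mul_assoc, ← pow_succ', ← add_smul]
    congr 1
    ring

end

theorem stmt8_general {R : Type*} [CommRing R] {N : ℕ} (hN : 2 ≤ N)
    (d m : ℕ) (hm : 2 * m ≤ d) (h : MvPolynomial (Fin N) R)
    (hharm : lap h = 0) (hhom : h.IsHomogeneous (d - 2 * m)) :
    XX R N * lap (XX R N ^ m * h) =
      (2 * m * (N - 2 + 2 * d - 2 * m)) • (XX R N ^ m * h) := by
  cases m with
  | zero => simp [hharm]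
  | succ k =>
    rw [lap_XX_pow_succ_mul hharm hhom k, mul_smul_comm, ← mul_assoc, ← pow_succ']
    congr 2
    omega

/-- for `0 ≤ m` with `2m ≤ d` and `h` harmonic homogeneous of degree
`d − 2m`, `(X·X)^m·h` is an eigenvector of `p ↦ (X·X)·Δp` with eigenvalue
`2m(N−2+2d−2m)`. -/
theorem stmt8 {R : Type*} [CommRing R] [Algebra ℚ R] {N : ℕ} (hN : 2 ≤ N)
    (d m : ℕ) (hm : 2 * m ≤ d) (h : MvPolynomial (Fin N) R)
    (hharm : lap h = 0) (hhom : h.IsHomogeneous (d - 2 * m)) :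
    XX R N * lap (XX R N ^ m * h) =
      (2 * m * (N - 2 + 2 * d - 2 * m)) • (XX R N ^ m * h) :=
  stmt8_general hN d m hm h hharm hhom
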